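/- Let τ > 0 and let φ : ℝ → ℝ be a twice differentiable function with φ(s) > 0 for all s satisfying φ'(s)² + (φ(s)² − τ)² = φ(s)² and φ''(s) = φ(s) − 2φ(s)(φ(s)² − τ) for all s ∈ ℝ. Define ζ(s) := φ(s) + τ/φ(s). Then ζ''(s) = ζ(s)(1 + 8τ − 2ζ(s)²) for every s ∈ ℝ. -/

import Mathlib

/-! Since `ζ' = φ' (1 - τ/φ²)`, one more differentiation gives `ζ'' = φ'' (1 - τ/φ²) + 2τ φ'²/φ³`;
eliminating `φ''` with the second-order equation and `φ'²` with the first-order one leaves a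
rational identity in `φ` alone. -/

theorem HasDerivAt.add_const_div {f : ℝ → ℝ} {f' x : ℝ} (c : ℝ) (hf : HasDerivAt f f' x)
    (hx : f x ≠ 0) : HasDerivAt (fun t => f t + c / f t) (f' * (1 - c / f x ^ 2)) x := by
  refine (hf.fun_add ((hasDerivAt_const x c).fun_div hf hx)).congr_deriv ?_
  field_simp
  ring

theorem deriv_add_const_div {f : ℝ → ℝ} (c : ℝ) (hf : Differentiable ℝ f) (hne : ∀ t, f t ≠ 0) :
    deriv (fun t => f t + c / f t) = fun t => deriv f t * (1 - c / f t ^ 2) :=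
  funext fun t => ((hf t).hasDerivAt.add_const_div c (hne t)).deriv

theorem deriv_deriv_add_const_div {f : ℝ → ℝ} (c : ℝ) (hf : Differentiable ℝ f)
    (hf' : Differentiable ℝ (deriv f)) (hne : ∀ t, f t ≠ 0) (x : ℝ) :
    deriv (deriv (fun t => f t + c / f t)) x
      = deriv (deriv f) x * (1 - c / f x ^ 2) + 2 * c * deriv f x ^ 2 / f x ^ 3 := by
  have hsq : HasDerivAt (fun t => f t ^ 2) (2 * f x * deriv f x) x := by
    simpa using (hf x).hasDerivAt.fun_pow 2
  have hfactor : HasDerivAt (fun t => 1 - c / f t ^ 2)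
      (-((0 * f x ^ 2 - c * (2 * f x * deriv f x)) / (f x ^ 2) ^ 2)) x :=
    ((hasDerivAt_const x c).div hsq (pow_ne_zero 2 (hne x))).const_sub 1
  rw [deriv_add_const_div c hf hne, ((hf' x).hasDerivAt.fun_mul hfactor).deriv]
  field_simp
  ring

theorem nodoid_zeta_identity {τ y p q : ℝ} (hy : y ≠ 0)
    (hp : p ^ 2 + (y ^ 2 - τ) ^ 2 = y ^ 2) (hq : q = y - 2 * y * (y ^ 2 - τ)) :
    q * (1 - τ / y ^ 2) + 2 * τ * p ^ 2 / y ^ 3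
      = (y + τ / y) * (1 + 8 * τ - 2 * (y + τ / y) ^ 2) := by
  subst hq
  field_simp
  linear_combination (2 * τ) * hp

theorem delaunay_zeta_second_order_general (τ : ℝ) (φ : ℝ → ℝ)
    (hd1 : Differentiable ℝ φ) (hd2 : Differentiable ℝ (deriv φ))
    (hpos : ∀ s, 0 < φ s)
    (hode1 : ∀ s, (deriv φ s) ^ 2 + (φ s ^ 2 - τ) ^ 2 = φ s ^ 2)
    (hode2 : ∀ s, deriv (deriv φ) s = φ s - 2 * φ s * (φ s ^ 2 - τ)) :
    ∀ s : ℝ, deriv (deriv (fun t => φ t + τ / φ t)) s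
      = (φ s + τ / φ s) * (1 + 8 * τ - 2 * (φ s + τ / φ s) ^ 2) := by
  intro s
  rw [deriv_deriv_add_const_div τ hd1 hd2 (fun t => (hpos t).ne')]
  exact nodoid_zeta_identity (hpos s).ne' (hode1 s) (hode2 s)

/-- For a positive solution `φ` of the Delaunay nodoid profile ODE
`φ'² + (φ² − τ)² = φ²` (also satisfying the second-order equation
`φ'' = φ − 2φ(φ² − τ)`), the auxiliary function `ζ = φ + τ/φ` satisfies
`ζ'' = ζ(1 + 8τ − 2ζ²)`. -/
theorem delaunay_zeta_second_order (τ : ℝ) (hτ : 0 < τ) (φ : ℝ → ℝ)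
    (hd1 : Differentiable ℝ φ) (hd2 : Differentiable ℝ (deriv φ))
    (hpos : ∀ s, 0 < φ s)
    (hode1 : ∀ s, (deriv φ s) ^ 2 + (φ s ^ 2 - τ) ^ 2 = φ s ^ 2)
    (hode2 : ∀ s, deriv (deriv φ) s = φ s - 2 * φ s * (φ s ^ 2 - τ)) :
    ∀ s : ℝ, deriv (deriv (fun t => φ t + τ / φ t)) s
      = (φ s + τ / φ s) * (1 + 8 * τ - 2 * (φ s + τ / φ s) ^ 2) :=
  delaunay_zeta_second_order_general τ φ hd1 hd2 hpos hode1 hode2
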